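/- arXiv:2109.02082 — 3 statements merged into one kernel-verified Lean document; each statement's English description precedes it below -/
import Mathlib

section
/- (Ballot-type identity for the simple symmetric random walk) Let δ_1, …, δ_n be i.i.d. random variables taking values ±1 with probability 1/2 each, and let S_k = δ_1 + … + δ_k. Then P(S_k > 0 for all 1 ≤ k ≤ n) + P(S_k < 0 for all 1 ≤ k ≤ n) = E[|S_n|]/n. -/
/-!
Almost surely every step is `±1`, and each of the `2ⁿ` sign patterns of the first `n` steps has
probability `2⁻ⁿ`, so the identity reduces to counting `±1` paths of length `n`. The ballot
theorem says that a fraction `h / n` of the paths ending at height `h > 0` stays positive; it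
follows by induction on `n`, splitting on the last step, from the flip identity
`(n + 1 + h) * #(paths ending at h + 1) = (n + 1 - h) * #(paths ending at h - 1)`.
Summing over `h` gives `n * #(positive paths) = ∑ max (S_n) 0`, and reversing every step turns
positive paths into negative ones and `max (S_n) 0` into `max (-S_n) 0`.
-/

open MeasureTheory ProbabilityTheory Finset

theorem Finset.sum_powerset_sdiff {α M : Type*} [DecidableEq α] [AddCommMonoid M]
    (s : Finset α) (f : Finset α → M) :
    ∑ t ∈ s.powerset, f (s \ t) = ∑ t ∈ s.powerset, f t :=
  sum_nbij' (s \ ·) (s \ ·) (fun _ _ => mem_powerset.2 sdiff_subset)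
    (fun _ _ => mem_powerset.2 sdiff_subset) (fun _ ht => sdiff_sdiff_eq_self (mem_powerset.1 ht))
    (fun _ ht => sdiff_sdiff_eq_self (mem_powerset.1 ht)) fun _ _ => rfl

namespace Ballot

/-- Height after `k` steps of the `±1` path that steps up exactly at the times in `s`. -/
def walk (s : Finset ℕ) (k : ℕ) : ℤ := ∑ i ∈ range k, if i ∈ s then 1 else -1

def StaysPositive (n : ℕ) (s : Finset ℕ) : Prop := ∀ k ∈ Icc 1 n, 0 < walk s k

instance (n : ℕ) : DecidablePred (StaysPositive n) :=
  fun _ => inferInstanceAs (Decidable (∀ k ∈ Icc 1 n, _))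

def pathCount (n : ℕ) (h : ℤ) : ℕ := #{s ∈ (range n).powerset | walk s n = h}

def positivePathCount (n : ℕ) (h : ℤ) : ℕ :=
  #{s ∈ (range n).powerset | StaysPositive n s ∧ walk s n = h}

variable {n k : ℕ} {s : Finset ℕ}

theorem walk_succ (s : Finset ℕ) (k : ℕ) :
    walk s (k + 1) = walk s k + if k ∈ s then 1 else -1 :=
  sum_range_succ _ _

theorem walk_insert (hk : k ≤ n) : walk (insert n s) k = walk s k :=
  sum_congr rfl fun i hi => by
    have hin : i ≠ n := by rw [mem_range] at hi; omega
    simp only [mem_insert, hin, false_or]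

theorem walk_succ_of_subset (hs : s ⊆ range n) : walk s (n + 1) = walk s n - 1 := by
  rw [walk_succ, if_neg fun h => notMem_range_self (hs h), sub_eq_add_neg]

theorem walk_insert_succ (s : Finset ℕ) (n : ℕ) : walk (insert n s) (n + 1) = walk s n + 1 := by
  rw [walk_succ, walk_insert le_rfl, if_pos (mem_insert_self n s)]

theorem walk_range_sdiff (hk : k ≤ n) : walk (range n \ s) k = -walk s k := by
  rw [walk, walk, ← sum_neg_distrib]
  refine sum_congr rfl fun i hi => ?_
  have hin : i ∈ range n := by simp only [mem_range] at hi ⊢; omega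
  by_cases his : i ∈ s <;> simp [hin, his]

theorem staysPositive_succ :
    StaysPositive (n + 1) s ↔ StaysPositive n s ∧ 0 < walk s (n + 1) := by
  rw [StaysPositive, ← insert_Icc_right_eq_Icc_add_one (by omega), forall_mem_insert, and_comm]
  rfl

theorem staysPositive_congr {t : Finset ℕ} (h : ∀ k ≤ n, walk s k = walk t k) :
    StaysPositive n s ↔ StaysPositive n t :=
  forall₂_congr fun k hk => by rw [h k (mem_Icc.1 hk).2]

theorem card_filter_powerset_range_succ (p : Finset ℕ → Prop) [DecidablePred p] :
    #{s ∈ (range (n + 1)).powerset | p s}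
      = #{s ∈ (range n).powerset | p s} + #{s ∈ (range n).powerset | p (insert n s)} := by
  simp only [card_filter]
  rw [range_add_one, sum_powerset_insert notMem_range_self]

theorem pathCount_zero (h : ℤ) : pathCount 0 h = if h = 0 then 1 else 0 := by
  simp [pathCount, walk, filter_singleton, apply_ite card, eq_comm]

theorem positivePathCount_zero (h : ℤ) : positivePathCount 0 h = if h = 0 then 1 else 0 := by
  simp [positivePathCount, StaysPositive, walk, apply_ite card, eq_comm]

theorem pathCount_succ (n : ℕ) (h : ℤ) :
    pathCount (n + 1) h = pathCount n (h + 1) + pathCount n (h - 1) := by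
  rw [pathCount, card_filter_powerset_range_succ, pathCount, pathCount]
  congr 2 <;> refine filter_congr fun s hs => ?_
  · rw [walk_succ_of_subset (mem_powerset.1 hs)]; omega
  · rw [walk_insert_succ]; omega

theorem positivePathCount_succ {h : ℤ} (hh : 0 < h) :
    positivePathCount (n + 1) h = positivePathCount n (h + 1) + positivePathCount n (h - 1) := by
  rw [positivePathCount, card_filter_powerset_range_succ, positivePathCount, positivePathCount]
  congr 2 <;> refine filter_congr fun s hs => ?_
  · rw [staysPositive_succ, walk_succ_of_subset (mem_powerset.1 hs), and_assoc]
    exact and_congr_right fun _ => by omega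
  · rw [staysPositive_succ, walk_insert_succ, staysPositive_congr fun k hk => walk_insert hk,
      and_assoc]
    exact and_congr_right fun _ => by omega

theorem mul_positivePathCount_of_nonpos (hn : 1 ≤ n) {h : ℤ} (hh : h ≤ 0) :
    n * positivePathCount n h = max h 0 * pathCount n h := by
  suffices positivePathCount n h = 0 by simp [this, max_eq_right hh]
  rw [positivePathCount, card_eq_zero, filter_eq_empty_iff]
  rintro s - ⟨hpos, rfl⟩
  exact (hpos n (mem_Icc.2 ⟨hn, le_rfl⟩)).not_ge hh

/-- Flipping a marked up-step of a path ending at `h + 1` gives a path ending at `h - 1` with a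
marked down-step; both sides are twice the number of such pairs. -/
theorem mul_pathCount_add_one (n : ℕ) (h : ℤ) :
    (n + 1 + h) * pathCount n (h + 1) = (n + 1 - h) * pathCount n (h - 1) := by
  induction n generalizing h with
  | zero => simp only [pathCount_zero]; split_ifs <;> push_cast <;> omega
  | succ n ih =>
    have up := ih (h + 1)
    have down := ih (h - 1)
    simp only [add_sub_cancel_right, sub_add_cancel] at up down
    rw [pathCount_succ, pathCount_succ, add_sub_cancel_right, sub_add_cancel]
    push_cast
    linear_combination up + down

theorem mul_positivePathCount (hn : 1 ≤ n) (h : ℤ) :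
    n * positivePathCount n h = max h 0 * pathCount n h := by
  induction n, hn using Nat.le_induction generalizing h with
  | base =>
    rcases le_or_gt h 0 with hh | hh
    · exact mul_positivePathCount_of_nonpos le_rfl hh
    rw [positivePathCount_succ hh, pathCount_succ, positivePathCount_zero, positivePathCount_zero,
      pathCount_zero, pathCount_zero, max_eq_left hh.le]
    split_ifs <;> push_cast <;> omega
  | succ n hn ih =>
    rcases le_or_gt h 0 with hh | hh
    · exact mul_positivePathCount_of_nonpos (by omega) hh
    have hup := ih (h + 1)
    have hdown := ih (h - 1)
    rw [max_eq_left (by omega)] at hup hdown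
    rw [positivePathCount_succ hh, pathCount_succ, max_eq_left hh.le]
    push_cast
    refine mul_left_cancel₀ (by positivity : (n : ℤ) ≠ 0) ?_
    linear_combination (n + 1) * hup + (n + 1) * hdown + mul_pathCount_add_one n h

theorem mul_card_staysPositive (hn : 1 ≤ n) :
    n * #{s ∈ (range n).powerset | StaysPositive n s}
      = ∑ s ∈ (range n).powerset, max (walk s n) 0 := by
  rw [sum_comp (fun h => max h 0) (walk · n), card_eq_sum_card_fiberwise (f := (walk · n))
    fun s hs => mem_image_of_mem (walk · n) (mem_filter.1 hs).1, Nat.cast_sum, mul_sum]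
  refine sum_congr rfl fun h _ => ?_
  rw [filter_filter, nsmul_eq_mul, mul_comm _ (max h 0)]
  exact mul_positivePathCount hn h

theorem card_staysPositive_range_sdiff :
    #{s ∈ (range n).powerset | StaysPositive n (range n \ s)}
      = #{s ∈ (range n).powerset | StaysPositive n s} := by
  simp only [card_filter]
  exact sum_powerset_sdiff (range n) fun s => if StaysPositive n s then 1 else 0

theorem two_mul_card_staysPositive (hn : 1 ≤ n) :
    2 * n * #{s ∈ (range n).powerset | StaysPositive n s}
      = ∑ s ∈ (range n).powerset, |walk s n| := by
  have hneg : ∑ s ∈ (range n).powerset, max (-walk s n) 0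
      = ∑ s ∈ (range n).powerset, max (walk s n) 0 := by
    rw [← sum_powerset_sdiff (range n) fun s => max (walk s n) 0]
    exact sum_congr rfl fun s _ => by rw [walk_range_sdiff le_rfl]
  simp_rw [← max_zero_add_max_neg_zero_eq_abs_self]
  rw [sum_add_distrib, hneg, ← mul_card_staysPositive hn]
  ring

section Probability

variable {Ω : Type*} {δ : ℕ → Ω → ℝ}

noncomputable def upSteps (δ : ℕ → Ω → ℝ) (n : ℕ) (ω : Ω) : Finset ℕ := {i ∈ range n | δ i ω = 1}

theorem setOf_upSteps_eq (hs : s ⊆ range n) :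
    {ω | upSteps δ n ω = s} = ⋂ i ∈ range n, δ i ⁻¹' if i ∈ s then {1} else {1}ᶜ := by
  ext ω
  simp only [Set.mem_ofPred_eq, Set.mem_iInter, upSteps, Finset.ext_iff, mem_filter]
  refine ⟨fun h i hi => ?_, fun h i => ?_⟩
  · specialize h i
    split_ifs with his <;> simp_all
  · by_cases hi : i ∈ range n
    · specialize h i hi
      split_ifs at h with his <;> simp_all
    · exact iff_of_false (fun h' => hi h'.1) fun h' => hi (hs h')

theorem sum_range_eq_walk_upSteps {ω : Ω} (hω : ∀ i, δ i ω = 1 ∨ δ i ω = -1) (hk : k ≤ n) :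
    ∑ i ∈ range k, δ i ω = walk (upSteps δ n ω) k := by
  rw [walk, Int.cast_sum]
  refine sum_congr rfl fun i hi => ?_
  have hin : i ∈ range n := by simp only [mem_range] at hi ⊢; omega
  rcases hω i with h | h <;> norm_num [upSteps, hin, h]

theorem staysPositive_upSteps_iff {ω : Ω} (hω : ∀ i, δ i ω = 1 ∨ δ i ω = -1) :
    StaysPositive n (upSteps δ n ω) ↔ ∀ k ∈ Icc 1 n, 0 < ∑ i ∈ range k, δ i ω :=
  forall₂_congr fun k hk => by rw [sum_range_eq_walk_upSteps hω (mem_Icc.1 hk).2, Int.cast_pos]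

theorem staysPositive_range_sdiff_upSteps_iff {ω : Ω} (hω : ∀ i, δ i ω = 1 ∨ δ i ω = -1) :
    StaysPositive n (range n \ upSteps δ n ω) ↔ ∀ k ∈ Icc 1 n, ∑ i ∈ range k, δ i ω < 0 :=
  forall₂_congr fun k hk => by
    rw [sum_range_eq_walk_upSteps hω (mem_Icc.1 hk).2, walk_range_sdiff (mem_Icc.1 hk).2,
      Int.cast_lt_zero, Left.neg_pos_iff]

variable [MeasurableSpace Ω] {P : Measure Ω}

theorem measurableSet_upSteps_eq (hmeas : ∀ i, Measurable (δ i)) (hs : s ⊆ range n) :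
    MeasurableSet {ω | upSteps δ n ω = s} := by
  rw [setOf_upSteps_eq hs]
  exact .biInter (Set.to_countable _) fun i _ => hmeas i (by split_ifs <;> simp)

theorem measure_upSteps_eq [IsProbabilityMeasure P] (hmeas : ∀ i, Measurable (δ i))
    (hindep : iIndepFun δ P) (hhalf : ∀ i, P {ω | δ i ω = 1} = 1 / 2) (hs : s ⊆ range n) :
    P {ω | upSteps δ n ω = s} = 2⁻¹ ^ n := by
  rw [setOf_upSteps_eq hs, hindep.measure_inter_preimage_eq_mul _ fun i _ => by split_ifs <;> simp]
  refine (prod_congr rfl fun i _ => ?_).trans ((prod_const _).trans (by rw [card_range]))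
  have hone : P (δ i ⁻¹' {1}) = 2⁻¹ := by rw [← one_div]; exact hhalf i
  split_ifs
  · exact hone
  · rw [Set.preimage_compl, prob_compl_eq_one_sub (hmeas i (measurableSet_singleton 1)), hone,
      ENNReal.one_sub_inv_two]

theorem measureReal_setOf_upSteps [IsProbabilityMeasure P] (hmeas : ∀ i, Measurable (δ i))
    (hindep : iIndepFun δ P) (hhalf : ∀ i, P {ω | δ i ω = 1} = 1 / 2)
    (Q : Finset ℕ → Prop) [DecidablePred Q] :
    P.real {ω | Q (upSteps δ n ω)} = #{s ∈ (range n).powerset | Q s} / 2 ^ n := by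
  have hfibers : {ω | Q (upSteps δ n ω)}
      = ⋃ s ∈ {s ∈ (range n).powerset | Q s}, {ω | upSteps δ n ω = s} := by
    ext ω
    simp only [Set.mem_ofPred_eq, Set.mem_iUnion, mem_filter, exists_prop]
    exact ⟨fun h => ⟨_, ⟨mem_powerset.2 (filter_subset _ _), h⟩, rfl⟩,
      fun ⟨s, ⟨_, hQ⟩, hs⟩ => hs ▸ hQ⟩
  rw [measureReal_def, hfibers, measure_biUnion_finset
      (fun s _ t _ hst => Set.disjoint_left.2 fun ω h₁ h₂ => hst (h₁.symm.trans h₂))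
      fun s hs => measurableSet_upSteps_eq hmeas (mem_powerset.1 (mem_filter.1 hs).1),
    sum_congr rfl fun s hs => measure_upSteps_eq hmeas hindep hhalf
      (mem_powerset.1 (mem_filter.1 hs).1), sum_const, nsmul_eq_mul]
  simp [div_eq_mul_inv]

theorem integral_comp_upSteps [IsProbabilityMeasure P] (hmeas : ∀ i, Measurable (δ i))
    (hindep : iIndepFun δ P) (hhalf : ∀ i, P {ω | δ i ω = 1} = 1 / 2) (G : Finset ℕ → ℝ) :
    ∫ ω, G (upSteps δ n ω) ∂P = (∑ s ∈ (range n).powerset, G s) / 2 ^ n := by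
  have hfibers : ∀ ω, G (upSteps δ n ω)
      = ∑ s ∈ (range n).powerset, {ω | upSteps δ n ω = s}.indicator (fun _ => G s) ω := by
    intro ω
    rw [sum_eq_single_of_mem (upSteps δ n ω) (mem_powerset.2 (filter_subset _ _)) fun s _ hs =>
      Set.indicator_of_notMem (s := {ω | upSteps δ n ω = s}) (Ne.symm hs) _]
    exact (Set.indicator_of_mem rfl _).symm
  simp only [hfibers]
  rw [integral_finsetSum _ fun s hs =>
      (integrable_const _).indicator (measurableSet_upSteps_eq hmeas (mem_powerset.1 hs)), sum_div]
  refine sum_congr rfl fun s hs => ?_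
  rw [integral_indicator_const _ (measurableSet_upSteps_eq hmeas (mem_powerset.1 hs)),
    measureReal_def, measure_upSteps_eq hmeas hindep hhalf (mem_powerset.1 hs)]
  simp [div_eq_inv_mul]

theorem ae_eq_one_or_neg_one [IsProbabilityMeasure P] (hmeas : ∀ i, Measurable (δ i))
    (hdist : ∀ i, P {ω | δ i ω = 1} = 1 / 2 ∧ P {ω | δ i ω = -1} = 1 / 2) :
    ∀ᵐ ω ∂P, ∀ i, δ i ω = 1 ∨ δ i ω = -1 := by
  refine ae_all_iff.2 fun i => ?_
  have hm : ∀ x : ℝ, MeasurableSet {ω | δ i ω = x} := fun x => hmeas i (measurableSet_singleton x)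
  refine (ae_iff_measure_eq ((hm 1).union (hm (-1))).nullMeasurableSet).2 ?_
  change P ({ω | δ i ω = 1} ∪ {ω | δ i ω = -1}) = P Set.univ
  have hdisj : Disjoint {ω | δ i ω = 1} {ω | δ i ω = -1} :=
    Set.disjoint_left.2 fun ω (h₁ : δ i ω = 1) (h₂ : δ i ω = -1) => by linarith
  rw [measure_union hdisj (hm (-1)), (hdist i).1, (hdist i).2, ENNReal.add_halves, measure_univ]

end Probability

end Ballot

open Ballot

/-- Ballot-type identity for the simple symmetric random walk: the probability of
staying strictly positive plus the probability of staying strictly negative up to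
time `n` equals `E|S_n|/n`. -/
theorem ballot_identity {Ω : Type*} [MeasurableSpace Ω] (P : Measure Ω)
    [IsProbabilityMeasure P] (δ : ℕ → Ω → ℝ) (n : ℕ) (hn : 1 ≤ n)
    (hmeas : ∀ i, Measurable (δ i))
    (hindep : iIndepFun δ P)
    (hdist : ∀ i, P {ω | δ i ω = 1} = 1/2 ∧ P {ω | δ i ω = -1} = 1/2) :
    (P {ω | ∀ k ∈ Finset.Icc 1 n, 0 < ∑ i ∈ Finset.range k, δ i ω}).toReal
      + (P {ω | ∀ k ∈ Finset.Icc 1 n, ∑ i ∈ Finset.range k, δ i ω < 0}).toReal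
      = (∫ ω, |∑ i ∈ Finset.range n, δ i ω| ∂P) / n := by
  have hae := ae_eq_one_or_neg_one hmeas hdist
  have hhalf := fun i => (hdist i).1
  have hpos : {ω | ∀ k ∈ Icc 1 n, 0 < ∑ i ∈ range k, δ i ω}
      =ᵐ[P] {ω | StaysPositive n (upSteps δ n ω)} :=
    hae.mono fun ω hω => propext (staysPositive_upSteps_iff hω).symm
  have hneg : {ω | ∀ k ∈ Icc 1 n, ∑ i ∈ range k, δ i ω < 0}
      =ᵐ[P] {ω | StaysPositive n (range n \ upSteps δ n ω)} :=
    hae.mono fun ω hω => propext (staysPositive_range_sdiff_upSteps_iff hω).symm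
  have habs : (fun ω => |∑ i ∈ range n, δ i ω|) =ᵐ[P] fun ω => |(walk (upSteps δ n ω) n : ℝ)| :=
    hae.mono fun ω hω => congrArg abs (sum_range_eq_walk_upSteps hω le_rfl)
  have hcount : ∑ s ∈ (range n).powerset, |(walk s n : ℝ)|
      = 2 * n * #{s ∈ (range n).powerset | StaysPositive n s} := by
    exact_mod_cast (two_mul_card_staysPositive hn).symm
  rw [← measureReal_def, ← measureReal_def, measureReal_congr hpos, measureReal_congr hneg,
    integral_congr_ae habs, measureReal_setOf_upSteps hmeas hindep hhalf,
    measureReal_setOf_upSteps hmeas hindep hhalf fun s => StaysPositive n (range n \ s),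
    card_staysPositive_range_sdiff,
    integral_comp_upSteps hmeas hindep hhalf fun s => |(walk s n : ℝ)|, hcount]
  field_simp
  ring
end

section
/- In the all-time extremum setting, the number of surviving equivalence classes at time T is at most (T − t_1) + (T − t_2), where t_1 is the last time an all-time maximum occurred and t_2 is the last time an all-time minimum occurred. Formally: if x_{t_1} ≥ x_τ for all τ ≤ t_1 and x_{t_2} ≤ x_τ for all τ ≤ t_2, then every surviving class index t (under the elimination rule of Theorem 3) satisfies t > min(t_1, t_2), so the number of survivors is at most max(T − t_1, T − t_2) + constant. -/
open scoped Classical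

/-- Discrete intermediate value: if `c < x a` and `x b ≤ c` with `a ≤ b`,
some consecutive pair crosses `c` downward. -/
lemma ivt_aux (x : ℕ → ℝ) (c : ℝ) : ∀ b a, a ≤ b → c < x a → x b ≤ c →
    ∃ τ, a ≤ τ ∧ τ < b ∧ x (τ + 1) ≤ c ∧ c ≤ x τ := by
  intro b
  induction b with
  | zero =>
    intro a ha h1 h2
    obtain rfl : a = 0 := Nat.le_zero.mp ha
    linarith
  | succ b ih =>
    intro a ha h1 h2
    rcases eq_or_lt_of_le ha with rfl | ha'
    · linarith
    · by_cases hb : x b ≤ c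
      · obtain ⟨τ, hτ1, hτ2, hτ3⟩ := ih a (by omega) h1 hb
        exact ⟨τ, hτ1, by omega, hτ3⟩
      · exact ⟨b, by omega, by omega, h2, le_of_lt (not_le.mp hb)⟩

/-- All-time extremum setting: if `x_{t1}` is an all-time maximum and `x_{t2}` an
all-time minimum, every class surviving the elimination rule has index beyond
`min(t1, t2)`, so the number of survivors is at most `(T - t1) + (T - t2)`. -/
theorem survivors_card_bound (T t1 t2 : ℕ) (x : ℕ → ℝ)
    (hinj : ∀ i j, i ≤ T → j ≤ T → x i = x j → i = j)
    (ht1 : t1 ≤ T) (ht2 : t2 ≤ T)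
    (hmax : ∀ τ ≤ t1, x τ ≤ x t1) (hmin : ∀ τ ≤ t2, x t2 ≤ x τ) :
    ((Finset.Ico 1 T).filter (fun t =>
        ¬ ∃ τ, t < τ ∧ τ < T ∧
          min (x τ) (x (τ + 1)) ≤ x t ∧ x t ≤ max (x τ) (x (τ + 1)))).card
      ≤ (T - t1) + (T - t2) := by
  have hsub : ((Finset.Ico 1 T).filter (fun t =>
        ¬ ∃ τ, t < τ ∧ τ < T ∧
          min (x τ) (x (τ + 1)) ≤ x t ∧ x t ≤ max (x τ) (x (τ + 1))))
      ⊆ Finset.Ico (min t1 t2) T := by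
    intro t ht
    simp only [Finset.mem_filter, Finset.mem_Ico] at ht ⊢
    obtain ⟨⟨h1t, htT⟩, hsurv⟩ := ht
    refine ⟨?_, htT⟩
    by_contra hlt
    push_neg at hlt
    apply hsurv
    have htt1 : t < t1 := lt_of_lt_of_le hlt (min_le_left _ _)
    have htt2 : t < t2 := lt_of_lt_of_le hlt (min_le_right _ _)
    have hx1 : x t < x t1 := lt_of_le_of_ne (hmax t htt1.le) (fun h => by
      have := hinj t t1 (le_of_lt htT) ht1 h; omega)
    have hx2 : x t2 < x t := lt_of_le_of_ne (hmin t htt2.le) (fun h => by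
      have := hinj t2 t ht2 (le_of_lt htT) h; omega)
    rcases le_total t1 t2 with h12 | h21
    · obtain ⟨τ, hτ1, hτ2, hτ3, hτ4⟩ := ivt_aux x (x t) t2 t1 h12 hx1 hx2.le
      exact ⟨τ, by omega, by omega,
        le_trans (min_le_right _ _) hτ3, le_trans hτ4 (le_max_left _ _)⟩
    · obtain ⟨τ, hτ1, hτ2, hτ3, hτ4⟩ :=
        ivt_aux (fun n => -x n) (-x t) t1 t2 h21 (by simpa) (by simpa using hx1.le)
      simp only [neg_le_neg_iff] at hτ3 hτ4
      exact ⟨τ, by omega, by omega,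
        le_trans (min_le_left _ _) hτ4, le_trans hτ3 (le_max_right _ _)⟩
  calc _ ≤ (Finset.Ico (min t1 t2) T).card := Finset.card_le_card hsub
    _ = T - min t1 t2 := Nat.card_Ico _ _
    _ ≤ (T - t1) + (T - t2) := by omega
end

section
/- Let (x_t)_{t=1}^T be a sequence of distinct reals and fix t < T. If there exists τ with t < τ < T such that min(x_τ, x_{τ+1}) ≤ x_t ≤ max(x_τ, x_{τ+1}), then x_t is neither strictly greater than all of x_{t+1}, …, x_T nor strictly smaller than all of them. Conversely, if x_t > x_τ for all τ ∈ (t, T] or x_t < x_τ for all τ ∈ (t, T], then no such sandwiching τ exists. Hence class t survives (per Theorem 3) if and only if x_t is a strict running maximum or strict running minimum of the suffix x_t, x_{t+1}, …, x_T. -/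
/-- Discrete IVT: if `x a < c < x b` with `a ≤ b`, some consecutive pair
between `a` and `b` crosses `c` upward. -/
lemma discrete_ivt (x : ℕ → ℝ) (c : ℝ) :
    ∀ b a, a ≤ b → x a < c → c < x b →
      ∃ τ, a ≤ τ ∧ τ + 1 ≤ b ∧ x τ ≤ c ∧ c ≤ x (τ + 1) := by
  intro b
  induction b with
  | zero =>
    intro a hab ha hb
    interval_cases a
    exact absurd (ha.trans hb) (lt_irrefl _)
  | succ n ih =>
    intro a hab ha hb
    have hane : a ≠ n + 1 := by rintro rfl; exact absurd (ha.trans hb) (lt_irrefl _)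
    have han : a ≤ n := Nat.lt_succ_iff.mp (lt_of_le_of_ne hab hane)
    by_cases hn : c < x n
    · obtain ⟨τ, h1, h2, h3, h4⟩ := ih a han ha hn
      exact ⟨τ, h1, h2.trans (Nat.le_succ n), h3, h4⟩
    · exact ⟨n, han, le_refl _, not_lt.mp hn, hb.le⟩

/-- Characterization of survivors under the elimination rule: for a sequence of
distinct values, class `t` survives (no later consecutive pair brackets `x t`) iff
`x t` is a strict running maximum or strict running minimum of the suffix. -/
theorem survivor_characterization (T t : ℕ) (x : ℕ → ℝ)
    (hinj : ∀ i j, i ≤ T → j ≤ T → x i = x j → i = j) (ht : t < T) :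
    (¬ ∃ τ, t < τ ∧ τ < T ∧
        min (x τ) (x (τ + 1)) ≤ x t ∧ x t ≤ max (x τ) (x (τ + 1)))
      ↔ ((∀ τ, t < τ → τ ≤ T → x τ < x t) ∨ (∀ τ, t < τ → τ ≤ T → x t < x τ)) := by
  constructor
  · intro hno
    by_contra hcon
    push_neg at hcon
    obtain ⟨⟨b, htb, hbT, hb⟩, ⟨a, hta, haT, ha⟩⟩ := hcon
    -- x b ≥ x t, x a ≤ x t; strict by injectivity
    have hbne : x b ≠ x t := fun h => absurd (hinj b t hbT ht.le h) (Nat.ne_of_gt htb)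
    have hane : x a ≠ x t := fun h => absurd (hinj a t haT ht.le h) (Nat.ne_of_gt hta)
    have hb' : x t < x b := lt_of_le_of_ne hb hbne.symm
    have ha' : x a < x t := lt_of_le_of_ne ha hane
    rcases le_total a b with hab | hba
    · obtain ⟨τ, h1, h2, h3, h4⟩ := discrete_ivt x (x t) b a hab ha' hb'
      exact hno ⟨τ, lt_of_lt_of_le hta h1, lt_of_lt_of_le h2 hbT,
        le_trans (min_le_left _ _) h3, le_trans h4 (le_max_right _ _)⟩
    · obtain ⟨τ, h1, h2, h3, h4⟩ := discrete_ivt (fun n => -x n) (-(x t)) a b hba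
        (by simpa using hb') (by simpa using ha')
      refine hno ⟨τ, lt_of_lt_of_le htb h1, lt_of_lt_of_le h2 haT, ?_, ?_⟩
      · exact le_trans (min_le_right _ _) (by simpa using h4)
      · exact le_trans (by simpa using h3) (le_max_left _ _)
  · rintro (h | h) ⟨τ, htτ, hτT, hmin, hmax⟩
    · have h1 := h τ htτ hτT.le
      have h2 := h (τ + 1) (htτ.trans (Nat.lt_succ_self τ)) hτT
      exact absurd hmax (not_le.mpr (max_lt h1 h2))
    · have h1 := h τ htτ hτT.le
      have h2 := h (τ + 1) (htτ.trans (Nat.lt_succ_self τ)) hτT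
      exact absurd hmin (not_le.mpr (lt_min h1 h2))
end
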